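/- arXiv:1902.04319 — 6 statements merged into one kernel-verified Lean document; each statement's English description precedes it below -/
import Mathlib

section
/- If an allocation problem with n agents satisfies v_i(g) ≤ (ε/n)·v_i(M) for every agent i and item g, and X is an EF1 allocation of all items M, then for every agent i, n·v_i(X_i) ≥ v_i(M) − (n−1)·(ε/n)·v_i(M), and consequently v_i(g) ≤ ε'·v_i(X_i) for every g ∈ X_i, where ε' = ε/(1 − ((n−1)/n)·ε), assuming ε < n/(n−1). -/
/-!
Summing agent `i`'s values over the bundles of a partition gives `v_i(M)`. By EF1, each of the
other `n - 1` bundles is worth at most `v_i(X_i)` plus one item, and one item is worth at most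
`(ε/n)·v_i(M)` in a large market; this is the first inequality. It says `v_i(M)` is at most
`n·v_i(X_i)/(1 - (n-1)ε/n)`, and multiplying by `ε/n` bounds any single item by `ε'·v_i(X_i)`.
-/

open Finset

theorem sum_sum_eq_sum_of_existsUnique_mem {ι α M : Type*} [Fintype ι] [Fintype α]
    [DecidableEq α] [AddCommMonoid M] (X : ι → Finset α) (hX : ∀ a, ∃! i, a ∈ X i)
    (f : α → M) : ∑ i, ∑ a ∈ X i, f a = ∑ a, f a := by
  have hdisj : (↑(univ : Finset ι) : Set ι).PairwiseDisjoint X := fun i _ j _ hij =>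
    disjoint_left.mpr fun a hi hj => hij ((hX a).unique hi hj)
  rw [← sum_biUnion hdisj]
  congr
  ext a
  simpa using (hX a).exists

theorem sum_le_add_of_le_sum_sdiff_singleton {α M : Type*} [DecidableEq α] [AddCommGroup M]
    [PartialOrder M] [IsOrderedAddMonoid M] {f : α → M} {t : Finset α} {a c : M}
    (ha : 0 ≤ a) (hc : 0 ≤ c) (hf : ∀ g ∈ t, f g ≤ c)
    (h : t.Nonempty → ∃ g ∈ t, a ≥ ∑ x ∈ t \ {g}, f x) :
    ∑ x ∈ t, f x ≤ a + c := by
  rcases t.eq_empty_or_nonempty with rfl | ht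
  · simpa using add_nonneg ha hc
  obtain ⟨g, hg, hle⟩ := h ht
  rw [sum_sdiff_eq_sub (singleton_subset_iff.mpr hg), sum_singleton, ge_iff_le,
    sub_le_iff_le_add] at hle
  exact hle.trans (add_le_add_right (hf g hg) a)

theorem sum_le_card_mul_add_of_le_add {ι : Type*} [DecidableEq ι] {s : Finset ι} {f : ι → ℝ} {i : ι} {c : ℝ}
    (hi : i ∈ s) (hf : ∀ j ∈ s, f j ≤ f i + c) :
    ∑ j ∈ s, f j ≤ #s * f i + (#s - 1) * c := by
  have hcard : ((#(s.erase i) : ℕ) : ℝ) = #s - 1 := by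
    rw [card_erase_of_mem hi, Nat.cast_pred (card_pos.mpr ⟨i, hi⟩)]
  have hrest : ∑ j ∈ s.erase i, f j ≤ #(s.erase i) * (f i + c) := by
    simpa [mul_add] using sum_le_sum fun j hj => hf j (mem_of_mem_erase hj)
  rw [← add_sum_erase s f hi]
  rw [hcard] at hrest
  linarith

theorem le_div_mul_of_mul_le {x V S ε n d : ℝ} (hn : 0 < n) (hε : 0 ≤ ε) (hd : 0 < d)
    (hx : x ≤ ε / n * V) (hV : d * V ≤ n * S) : x ≤ ε / d * S :=
  calc x ≤ ε / n * V := hx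
    _ = ε / (n * d) * (d * V) := by field_simp
    _ ≤ ε / (n * d) * (n * S) := by gcongr
    _ = ε / d * S := by field_simp

theorem large_market_ef1_general (n m : ℕ)
    (v : Fin n → Fin m → ℝ) (hv : ∀ i g, 0 < v i g)
    (ε : ℝ) (hε0 : 0 < ε) (hε1 : ε ≤ 1)
    (hlm : ∀ i g, v i g ≤ ε / (n : ℝ) * ∑ x : Fin m, v i x)
    (X : Fin n → Finset (Fin m))
    (hpart : ∀ g : Fin m, ∃! i, g ∈ X i)
    (hEF1 : ∀ i j : Fin n, (X j).Nonempty →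
      ∃ g ∈ X j, ∑ x ∈ X i, v i x ≥ ∑ x ∈ X j \ {g}, v i x) :
    ∀ i : Fin n,
      ((n : ℝ) * ∑ x ∈ X i, v i x ≥
        (∑ x : Fin m, v i x) - ((n : ℝ) - 1) * (ε / (n : ℝ)) * ∑ x : Fin m, v i x) ∧
      (∀ g ∈ X i,
        v i g ≤ ε / (1 - ((n : ℝ) - 1) / (n : ℝ) * ε) * ∑ x ∈ X i, v i x) := by
  intro i
  have hn : (0 : ℝ) < n := by exact_mod_cast i.pos
  have hsum_nonneg (s : Finset (Fin m)) : 0 ≤ ∑ x ∈ s, v i x :=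
    sum_nonneg fun x _ => (hv i x).le
  have hbundle (j : Fin n) : ∑ x ∈ X j, v i x ≤ ∑ x ∈ X i, v i x + ε / n * ∑ x, v i x :=
    sum_le_add_of_le_sum_sdiff_singleton (hsum_nonneg _)
      (mul_nonneg (by positivity) (hsum_nonneg _)) (fun g _ => hlm i g) (hEF1 i j)
  have htotal := sum_le_card_mul_add_of_le_add (mem_univ i) fun j _ => hbundle j
  rw [sum_sum_eq_sum_of_existsUnique_mem X hpart, card_univ, Fintype.card_fin] at htotal
  have hshare : (n : ℝ) * ∑ x ∈ X i, v i x ≥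
      (∑ x, v i x) - ((n : ℝ) - 1) * (ε / n) * ∑ x, v i x := by
    linarith
  have hd : 0 < 1 - ((n : ℝ) - 1) / n * ε := by
    have hfrac : ((n : ℝ) - 1) / n < 1 := by rw [div_lt_one hn]; linarith
    have hfrac_nonneg : 0 ≤ ((n : ℝ) - 1) / n := by
      have : (1 : ℝ) ≤ n := by exact_mod_cast i.pos
      positivity
    nlinarith
  refine ⟨hshare, fun g _ => le_div_mul_of_mul_le hn hε0.le hd (hlm i g) ?_⟩
  linear_combination hshare

/-- Claim 2.3: in a large market with parameter `ε`, any EF1 allocation `X` of all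
items satisfies `n·v_i(X_i) ≥ v_i(M) − (n−1)·(ε/n)·v_i(M)` for every agent `i`, and
consequently `v_i(g) ≤ ε'·v_i(X_i)` for `g ∈ X_i`, where `ε' = ε/(1 − ((n−1)/n)·ε)`. -/
theorem large_market_ef1 (n m : ℕ) (hn : 0 < n)
    (v : Fin n → Fin m → ℝ) (hv : ∀ i g, 0 < v i g)
    (ε : ℝ) (hε0 : 0 < ε) (hε1 : ε ≤ 1) (hε2 : ε < (n : ℝ) / ((n : ℝ) - 1))
    (hlm : ∀ i g, v i g ≤ ε / (n : ℝ) * ∑ x : Fin m, v i x)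
    (X : Fin n → Finset (Fin m))
    (hpart : ∀ g : Fin m, ∃! i, g ∈ X i)
    (hEF1 : ∀ i j : Fin n, (X j).Nonempty →
      ∃ g ∈ X j, ∑ x ∈ X i, v i x ≥ ∑ x ∈ X j \ {g}, v i x) :
    ∀ i : Fin n,
      ((n : ℝ) * ∑ x ∈ X i, v i x ≥
        (∑ x : Fin m, v i x) - ((n : ℝ) - 1) * (ε / (n : ℝ)) * ∑ x : Fin m, v i x) ∧
      (∀ g ∈ X i,
        v i g ≤ ε / (1 - ((n : ℝ) - 1) / (n : ℝ) * ε) * ∑ x ∈ X i, v i x) :=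
  large_market_ef1_general n m v hv ε hε0 hε1 hlm X hpart hEF1
end

section
/- Let a_1,…,a_{k+1} and b_1,…,b_{k+1} be real numbers all greater than −1, such that the non-increasing rearrangement of (b_i) is strictly majorized by the non-increasing rearrangement of (a_i): all partial sums of the sorted b's are at most those of the sorted a's, the total sums are equal, and the sequences are not rearrangements of one another. Then Σ_i ln(1 + b_i) > Σ_i ln(1 + a_i). -/
/-!
Tangent lines: by concavity, `log (1 + a i) ≤ log (1 + b i) + c i * (a i - b i)` with slope
`c i = (1 + b i)⁻¹`, strictly where `a i ≠ b i`. Since `b` is non-increasing the slopes are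
non-decreasing, and Abel summation rewrites `∑ c i * (a i - b i)` as minus a sum of slope
increments times the partial sums of `a - b`, which majorization makes non-negative.
-/

open Finset

namespace Real

lemma log_sub_log_le_sub_div {x y : ℝ} (hx : 0 < x) (hy : 0 < y) :
    log x - log y ≤ (x - y) / y := by
  rw [← log_div hx.ne' hy.ne', sub_div, div_self hy.ne']
  exact log_le_sub_one_of_pos (div_pos hx hy)

lemma log_sub_log_lt_sub_div {x y : ℝ} (hx : 0 < x) (hy : 0 < y) (hxy : x ≠ y) :
    log x - log y < (x - y) / y := by
  rw [← log_div hx.ne' hy.ne', sub_div, div_self hy.ne']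
  exact log_lt_sub_one_of_pos (div_pos hx hy) (by rwa [Ne, div_eq_one_iff_eq hy.ne'])

end Real

lemma Finset.sum_mul_nonpos_of_partial_sums_nonneg {R : Type*} [CommRing R] [LinearOrder R]
    [IsStrictOrderedRing R] (c g : ℕ → R) (n : ℕ) (hc : ∀ i < n, c i ≤ c (i + 1))
    (hpartial : ∀ s ≤ n, 0 ≤ ∑ i ∈ range s, g i) (htotal : ∑ i ∈ range (n + 1), g i = 0) :
    ∑ i ∈ range (n + 1), c i * g i ≤ 0 := by
  have abel := sum_range_by_parts c g (n + 1)
  simp only [smul_eq_mul, Nat.add_sub_cancel] at abel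
  rw [abel, htotal, mul_zero, zero_sub, neg_nonpos]
  refine sum_nonneg fun i hi => mul_nonneg ?_ (hpartial (i + 1) (mem_range.mp hi))
  exact sub_nonneg.mpr (hc i (mem_range.mp hi))

theorem karamata_log_general (k : ℕ) (a b : ℕ → ℝ)
    (ha1 : ∀ i ≤ k, -1 < a i) (hb1 : ∀ i ≤ k, -1 < b i)
    (hbMono : ∀ i j, i ≤ j → j ≤ k → b j ≤ b i)
    (hmaj : ∀ s ≤ k + 1, ∑ i ∈ Finset.range s, b i ≤ ∑ i ∈ Finset.range s, a i)
    (hsum : ∑ i ∈ Finset.range (k + 1), b i = ∑ i ∈ Finset.range (k + 1), a i)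
    (hne : ∃ i ≤ k, a i ≠ b i) :
    ∑ i ∈ Finset.range (k + 1), Real.log (1 + b i) >
      ∑ i ∈ Finset.range (k + 1), Real.log (1 + a i) := by
  have pos_a : ∀ i ∈ range (k + 1), 0 < 1 + a i := fun i hi =>
    by linarith [ha1 i (Nat.lt_succ_iff.mp (mem_range.mp hi))]
  have pos_b : ∀ i ∈ range (k + 1), 0 < 1 + b i := fun i hi =>
    by linarith [hb1 i (Nat.lt_succ_iff.mp (mem_range.mp hi))]
  have tangent : ∑ i ∈ range (k + 1), (Real.log (1 + a i) - Real.log (1 + b i)) <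
      ∑ i ∈ range (k + 1), (1 + b i)⁻¹ * (a i - b i) := by
    obtain ⟨j, hj, hjne⟩ := hne
    have hj' : j ∈ range (k + 1) := mem_range.mpr (Nat.lt_succ_of_le hj)
    refine sum_lt_sum (fun i hi => ?_) ⟨j, hj', ?_⟩
    · simpa [inv_mul_eq_div] using Real.log_sub_log_le_sub_div (pos_a i hi) (pos_b i hi)
    · simpa [inv_mul_eq_div] using
        Real.log_sub_log_lt_sub_div (pos_a j hj') (pos_b j hj') (by simpa using hjne)
  have abel : ∑ i ∈ range (k + 1), (1 + b i)⁻¹ * (a i - b i) ≤ 0 := by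
    refine sum_mul_nonpos_of_partial_sums_nonneg _ _ k (fun i hi => ?_) (fun s hs => ?_) ?_
    · have hb : 0 < 1 + b (i + 1) := pos_b (i + 1) (mem_range.mpr (by omega))
      exact inv_anti₀ hb (by linarith [hbMono i (i + 1) i.le_succ hi])
    · simpa [sum_sub_distrib] using hmaj s (by omega)
    · simp [sum_sub_distrib, hsum]
  rw [sum_sub_distrib] at tangent
  linarith

/-- Strict Karamata inequality for the strictly concave function `log (1 + ·)` on
`(-1, ∞)`: if the non-increasing sequence `b` is strictly majorized by the
non-increasing sequence `a`, then `∑ log (1 + b i) > ∑ log (1 + a i)`. -/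
theorem karamata_log (k : ℕ) (a b : ℕ → ℝ)
    (ha1 : ∀ i ≤ k, -1 < a i) (hb1 : ∀ i ≤ k, -1 < b i)
    (haMono : ∀ i j, i ≤ j → j ≤ k → a j ≤ a i)
    (hbMono : ∀ i j, i ≤ j → j ≤ k → b j ≤ b i)
    (hmaj : ∀ s ≤ k + 1, ∑ i ∈ Finset.range s, b i ≤ ∑ i ∈ Finset.range s, a i)
    (hsum : ∑ i ∈ Finset.range (k + 1), b i = ∑ i ∈ Finset.range (k + 1), a i)
    (hne : ∃ i ≤ k, a i ≠ b i) :
    ∑ i ∈ Finset.range (k + 1), Real.log (1 + b i) >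
      ∑ i ∈ Finset.range (k + 1), Real.log (1 + a i) :=
  karamata_log_general k a b ha1 hb1 hbMono hmaj hsum hne
end

section
/- For every positive integer n and every ε with 0 < ε < 1/2, there exists an allocation problem with n agents, 2n−1 items, and additive positive valuations, such that for every subset S of the items and every EFX allocation Y of S, we have (2^{1−1/n} − 2ε)·NW(Y) ≤ opt(M), where opt(M) is the maximum Nash welfare over all allocations of all items M and NW denotes Nash welfare. -/
/-!
Every EFX allocation of the instance gives every agent value at most `1`. An agent holding no
common item gets less than `1` even from all non-common items together. An agent holding a common
item `c` together with a second item `g` cannot exist: every agent values `Y i \ {g} ∋ c` at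
least `1`, so by EFX all `n` agents would need a common item, but there are only `n - 1`.
Hence `NW(Y) ≤ 1`. On the other hand, giving each of the first `n - 1` agents a common item and
its personal item shows `opt ^ n ≥ (2 - ε) ^ (n - 1) (1 - ε) ≥ (2 ^ (1 - 1/n) (1 - ε)) ^ n`, and
`2 ^ (1 - 1/n) (1 - ε) ≥ 2 ^ (1 - 1/n) - 2ε`.
-/

open Finset Function

namespace EFX

variable {α ι : Type*}

def IsEFX [DecidableEq ι] (v : α → ι → ℝ) (Y : α → Finset ι) : Prop :=
  ∀ i j, ∀ g ∈ Y j, ∑ x ∈ Y j \ {g}, v i x ≤ ∑ x ∈ Y i, v i x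

lemma pairwise_disjoint_of_existsUnique {S : Finset ι} {Y : α → Finset ι}
    (hYS : ∀ i, Y i ⊆ S) (hY : ∀ g ∈ S, ∃! i, g ∈ Y i) : Pairwise (Disjoint on Y) :=
  fun i _ hij => disjoint_left.2 fun g hi hj => hij ((hY g (hYS i hi)).unique hi hj)

lemma exists_max_partition [Finite α] [Finite ι] (f : (α → Finset ι) → ℝ) {X₀ : α → Finset ι}
    (hX₀ : ∀ g, ∃! i, g ∈ X₀ i) :
    ∃ X : α → Finset ι, (∀ g, ∃! i, g ∈ X i) ∧
      ∀ X' : α → Finset ι, (∀ g, ∃! i, g ∈ X' i) → f X' ≤ f X :=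
  Set.exists_max_image {X : α → Finset ι | ∀ g, ∃! i, g ∈ X i} f (Set.toFinite _) ⟨X₀, hX₀⟩

lemma existsUnique_mem_filter_eq [Fintype ι] [DecidableEq α] (owner : ι → α) (g : ι) :
    ∃! i, g ∈ ({x | owner x = i} : Finset ι) :=
  ⟨owner g, by simp, fun i h => by simpa [eq_comm] using h⟩

section Common

variable [Fintype ι] [DecidableEq ι] {C : Finset ι}

lemma sum_lt_one_of_disjoint {w : ι → ℝ} (hw : ∀ g, 0 ≤ w g) (hC : ∑ g ∈ Cᶜ, w g < 1)
    {B : Finset ι} (hB : Disjoint B C) : ∑ g ∈ B, w g < 1 :=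
  (sum_le_sum_of_subset_of_nonneg (subset_compl_iff_disjoint_right.2 hB)
    fun g _ _ => hw g).trans_lt hC

variable [Fintype α] {v : α → ι → ℝ} {Y : α → Finset ι}

lemma IsEFX.eq_singleton_of_mem_common (hefx : IsEFX v Y) (hY : Pairwise (Disjoint on Y))
    (hv : ∀ i g, 0 ≤ v i g) (hvC : ∀ i, ∀ c ∈ C, v i c = 1)
    (hvCc : ∀ i, ∑ g ∈ Cᶜ, v i g < 1) (hcard : #C < Fintype.card α)
    {i : α} {c : ι} (hc : c ∈ Y i) (hcC : c ∈ C) : Y i = {c} := by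
  by_contra hne
  obtain ⟨g, hg, hgc⟩ : ∃ g ∈ Y i, g ≠ c := by
    by_contra! h
    exact hne (eq_singleton_iff_unique_mem.2 ⟨hc, h⟩)
  have hcommon : ∀ j, ∃ c' ∈ C, c' ∈ Y j := by
    intro j
    by_contra! h
    have hlt := sum_lt_one_of_disjoint (hv j) (hvCc j) (disjoint_right.2 h)
    have hge : v j c ≤ ∑ x ∈ Y i \ {g}, v j x :=
      single_le_sum (fun x _ => hv j x) (mem_sdiff.2 ⟨hc, by simpa using hgc.symm⟩)
    linarith [hvC j c hcC, hefx j i g hg]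
  choose f hfC hfY using hcommon
  have : #(univ : Finset α) ≤ #C :=
    card_le_card_of_injOn f (fun j _ => hfC j) fun j _ k _ hjk =>
      hY.eq (not_disjoint_iff.2 ⟨f j, hfY j, hjk ▸ hfY k⟩)
  rw [card_univ] at this
  omega

lemma IsEFX.sum_le_one (hefx : IsEFX v Y) (hY : Pairwise (Disjoint on Y))
    (hv : ∀ i g, 0 ≤ v i g) (hvC : ∀ i, ∀ c ∈ C, v i c = 1)
    (hvCc : ∀ i, ∑ g ∈ Cᶜ, v i g < 1) (hcard : #C < Fintype.card α) (i : α) :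
    ∑ x ∈ Y i, v i x ≤ 1 := by
  by_cases h : Disjoint (Y i) C
  · exact (sum_lt_one_of_disjoint (hv i) (hvCc i) h).le
  · obtain ⟨c, hc, hcC⟩ := not_disjoint_iff.1 h
    rw [hefx.eq_singleton_of_mem_common hY hv hvC hvCc hcard hc hcC, sum_singleton, hvC i c hcC]

lemma IsEFX.prod_le_one (hefx : IsEFX v Y) (hY : Pairwise (Disjoint on Y))
    (hv : ∀ i g, 0 ≤ v i g) (hvC : ∀ i, ∀ c ∈ C, v i c = 1)
    (hvCc : ∀ i, ∑ g ∈ Cᶜ, v i g < 1) (hcard : #C < Fintype.card α) :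
    ∏ i, ∑ x ∈ Y i, v i x ≤ 1 :=
  Finset.prod_le_one (fun i _ => sum_nonneg fun x _ => hv i x)
    fun i _ => hefx.sum_le_one hY hv hvC hvCc hcard i

end Common

section Instance

variable {n : ℕ} {ε : ℝ}

def commonItems (n : ℕ) : Finset (Fin (2 * n - 1)) := {g | (g : ℕ) < n - 1}

/-- Items and agents are `0`-indexed, and agent `i` here is agent `n - i` of the paper. -/
def personalItem (n : ℕ) (i : Fin n) : Fin (2 * n - 1) := ⟨n - 1 + i, by omega⟩

noncomputable def efxInstance (n : ℕ) (ε : ℝ) (i : Fin n) (g : Fin (2 * n - 1)) : ℝ :=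
  if g ∈ commonItems n then 1 else if g = personalItem n i then 1 - ε else ε / (2 * n)

/-- Common item `g` goes to agent `g`, every other item to the agent it is personal for. -/
def owner (n : ℕ) (g : Fin (2 * n - 1)) : Fin n :=
  ⟨if (g : ℕ) < n - 1 then g else g - (n - 1), by split_ifs <;> omega⟩

def pairedAllocation (n : ℕ) (i : Fin n) : Finset (Fin (2 * n - 1)) := {g | owner n g = i}

lemma card_commonItems_lt (hn : 0 < n) : #(commonItems n) < n := by
  rw [commonItems, Fin.card_filter_val_lt]
  omega

lemma personalItem_notMem_commonItems (i : Fin n) : personalItem n i ∉ commonItems n := by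
  simp [commonItems, personalItem]

lemma efxInstance_of_mem_commonItems (i : Fin n) {g : Fin (2 * n - 1)}
    (hg : g ∈ commonItems n) : efxInstance n ε i g = 1 :=
  if_pos hg

lemma efxInstance_personalItem (i : Fin n) : efxInstance n ε i (personalItem n i) = 1 - ε := by
  simp [efxInstance, personalItem_notMem_commonItems]

lemma efxInstance_pos (hε0 : 0 < ε) (hε1 : ε < 1) (i : Fin n) (g : Fin (2 * n - 1)) :
    0 < efxInstance n ε i g := by
  have : (0 : ℝ) < n := Nat.cast_pos.2 i.pos
  unfold efxInstance
  split_ifs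
  · exact one_pos
  · linarith
  · positivity

lemma sum_compl_commonItems_efxInstance_lt_one (hε0 : 0 < ε) (i : Fin n) :
    ∑ g ∈ (commonItems n)ᶜ, efxInstance n ε i g < 1 := by
  set E := (commonItems n)ᶜ.erase (personalItem n i)
  have hp : personalItem n i ∈ (commonItems n)ᶜ :=
    mem_compl.2 (personalItem_notMem_commonItems i)
  have hrest : ∀ g ∈ E, efxInstance n ε i g = ε / (2 * n) := fun g hg => by
    obtain ⟨hgp, hgC⟩ := mem_erase.1 hg
    simp [efxInstance, mem_compl.1 hgC, hgp]
  have hcard : (#E : ℝ) < 2 * n := by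
    have := i.pos
    have := card_le_univ E
    rw [Fintype.card_fin] at this
    exact_mod_cast (show #E < 2 * n by omega)
  have hn : (0 : ℝ) < n := Nat.cast_pos.2 i.pos
  rw [← add_sum_erase _ _ hp, efxInstance_personalItem, sum_congr rfl hrest, sum_const,
    nsmul_eq_mul]
  calc 1 - ε + #E * (ε / (2 * n)) < 1 - ε + 2 * n * (ε / (2 * n)) := by gcongr
    _ = 1 := by field_simp; ring

lemma pairedAllocation_castSucc {m : ℕ} (j : Fin m) :
    pairedAllocation (m + 1) j.castSucc = {⟨j, by omega⟩, personalItem (m + 1) j.castSucc} := by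
  ext g
  simp only [pairedAllocation, owner, personalItem, mem_filter, mem_univ, true_and, mem_insert,
    mem_singleton, Fin.ext_iff, Fin.val_castSucc]
  split_ifs <;> omega

lemma pairedAllocation_last (m : ℕ) :
    pairedAllocation (m + 1) (Fin.last m) = {personalItem (m + 1) (Fin.last m)} := by
  ext g
  simp only [pairedAllocation, owner, personalItem, mem_filter, mem_univ, true_and,
    mem_singleton, Fin.ext_iff, Fin.val_last]
  split_ifs <;> omega

lemma prod_sum_pairedAllocation_efxInstance (hn : 0 < n) (ε : ℝ) :
    ∏ i, ∑ g ∈ pairedAllocation n i, efxInstance n ε i g = (2 - ε) ^ (n - 1) * (1 - ε) := by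
  obtain ⟨m, rfl⟩ : ∃ m, n = m + 1 := ⟨n - 1, by omega⟩
  have hpair (j : Fin m) :
      ∑ g ∈ pairedAllocation (m + 1) j.castSucc, efxInstance (m + 1) ε j.castSucc g = 2 - ε := by
    have hcommon : (⟨j, by omega⟩ : Fin (2 * (m + 1) - 1)) ∈ commonItems (m + 1) := by
      simp [commonItems]
    rw [pairedAllocation_castSucc, sum_pair (ne_of_mem_of_not_mem hcommon
      (personalItem_notMem_commonItems _)), efxInstance_of_mem_commonItems _ hcommon,
      efxInstance_personalItem]
    ring
  rw [Fin.prod_univ_castSucc, pairedAllocation_last, sum_singleton, efxInstance_personalItem]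
  simp [hpair]

end Instance

lemma two_rpow_mul_pow_le {n : ℕ} (hn : 0 < n) {ε : ℝ} (hε0 : 0 ≤ ε) (hε1 : ε ≤ 1) :
    ((2 : ℝ) ^ (1 - 1 / (n : ℝ)) * (1 - ε)) ^ n ≤ (2 - ε) ^ (n - 1) * (1 - ε) := by
  obtain ⟨m, rfl⟩ : ∃ m, n = m + 1 := ⟨n - 1, by omega⟩
  have hrpow : ((2 : ℝ) ^ (1 - 1 / ((m + 1 : ℕ) : ℝ))) ^ (m + 1) = 2 ^ m := by
    rw [← Real.rpow_natCast, ← Real.rpow_mul (by norm_num),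
      show (1 - 1 / ((m + 1 : ℕ) : ℝ)) * ((m + 1 : ℕ) : ℝ) = m by push_cast; field_simp; ring,
      Real.rpow_natCast]
  calc _ = (2 * (1 - ε)) ^ m * (1 - ε) := by rw [mul_pow, hrpow, pow_succ, mul_pow, mul_assoc]
    _ ≤ (2 - ε) ^ (m + 1 - 1) * (1 - ε) := by
      rw [Nat.add_sub_cancel]
      gcongr
      linarith

lemma two_rpow_sub_mul_rpow_le {n : ℕ} (hn : 0 < n) {ε P Q : ℝ} (hε0 : 0 ≤ ε) (hε1 : ε ≤ 1)
    (hP0 : 0 ≤ P) (hP1 : P ≤ 1) (hQ : (2 - ε) ^ (n - 1) * (1 - ε) ≤ Q) :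
    ((2 : ℝ) ^ (1 - 1 / (n : ℝ)) - 2 * ε) * P ^ (1 / (n : ℝ)) ≤ Q ^ (1 / (n : ℝ)) := by
  set a := (2 : ℝ) ^ (1 - 1 / (n : ℝ))
  have ha : a ≤ 2 :=
    (Real.rpow_le_rpow_of_exponent_le one_le_two (sub_le_self 1 (by positivity))).trans_eq
      (Real.rpow_one 2)
  have haε : 0 ≤ a * (1 - ε) := mul_nonneg (by positivity) (by linarith)
  have hpow := (two_rpow_mul_pow_le hn hε0 hε1).trans hQ
  calc (a - 2 * ε) * P ^ (1 / (n : ℝ)) ≤ a * (1 - ε) * P ^ (1 / (n : ℝ)) := by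
        gcongr
        nlinarith
    _ ≤ a * (1 - ε) := mul_le_of_le_one_right haε (Real.rpow_le_one hP0 hP1 (by positivity))
    _ ≤ Q ^ (1 / (n : ℝ)) := by
        rwa [one_div, Real.le_rpow_inv_iff_of_pos haε ((pow_nonneg haε n).trans hpow)
          (Nat.cast_pos.2 hn), Real.rpow_natCast]

end EFX

open EFX

/-- Theorem 3.1: for every `n ≥ 1` and `0 < ε < 1/2` there is an allocation problem
with `n` agents, `2n−1` items and additive positive valuations, such that every EFX
allocation `Y` of every subset `S` of the items satisfies
`(2^{1−1/n} − 2ε)·NW(Y) ≤ opt(M)`, where `opt(M)` is witnessed by a Nash-welfare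
maximizing allocation `X` of all items. -/
theorem efx_nash_lower_bound (n : ℕ) (hn : 0 < n) (ε : ℝ) (hε0 : 0 < ε) (hε : ε < 1 / 2) :
    ∃ v : Fin n → Fin (2 * n - 1) → ℝ,
      (∀ i g, 0 < v i g) ∧
      ∃ X : Fin n → Finset (Fin (2 * n - 1)),
        (∀ g, ∃! i, g ∈ X i) ∧
        (∀ X' : Fin n → Finset (Fin (2 * n - 1)), (∀ g, ∃! i, g ∈ X' i) →
          ∏ i, ∑ x ∈ X' i, v i x ≤ ∏ i, ∑ x ∈ X i, v i x) ∧
        ∀ (S : Finset (Fin (2 * n - 1))) (Y : Fin n → Finset (Fin (2 * n - 1))),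
          (∀ i, Y i ⊆ S) →
          (∀ g ∈ S, ∃! i, g ∈ Y i) →
          (∀ i j : Fin n, ∀ g ∈ Y j,
            ∑ x ∈ Y i, v i x ≥ ∑ x ∈ Y j \ {g}, v i x) →
          ((2 : ℝ) ^ (1 - 1 / (n : ℝ)) - 2 * ε) *
              (∏ i, ∑ x ∈ Y i, v i x) ^ (1 / (n : ℝ)) ≤
            (∏ i, ∑ x ∈ X i, v i x) ^ (1 / (n : ℝ)) := by
  have hv (i g) : 0 < efxInstance n ε i g := efxInstance_pos hε0 (by linarith) i g
  have hX₀ := existsUnique_mem_filter_eq (owner n)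
  obtain ⟨X, hX, hXmax⟩ :=
    exists_max_partition (fun X => ∏ i, ∑ x ∈ X i, efxInstance n ε i x) hX₀
  refine ⟨efxInstance n ε, hv, X, hX, hXmax, fun S Y hYS hY hefx => ?_⟩
  have hNW : ∏ i, ∑ x ∈ Y i, efxInstance n ε i x ≤ 1 :=
    IsEFX.prod_le_one hefx (pairwise_disjoint_of_existsUnique hYS hY) (fun i g => (hv i g).le)
      (fun i _ => efxInstance_of_mem_commonItems i)
      (sum_compl_commonItems_efxInstance_lt_one hε0) (by simpa using card_commonItems_lt hn)
  have hY0 : 0 ≤ ∏ i, ∑ x ∈ Y i, efxInstance n ε i x :=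
    prod_nonneg fun i _ => sum_nonneg fun x _ => (hv i x).le
  have hopt : (2 - ε) ^ (n - 1) * (1 - ε) ≤ ∏ i, ∑ x ∈ X i, efxInstance n ε i x :=
    (prod_sum_pairedAllocation_efxInstance hn ε).symm.trans_le (hXmax _ hX₀)
  exact two_rpow_sub_mul_rpow_le hn hε0.le (by linarith) hY0 hNW hopt
end

section
/- In the lower-bound instance with n agents and 2n−1 items (where each agent values each of items 1,…,n−1 at 1, item 2n−i at 1−ε, and all other items at ε/(2n), with 0 < ε < 1), any EFX allocation Y of any subset S of the items gives every agent value at most 1, hence NW(Y) ≤ 1. -/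
/-!
Among the `n` bundles at least one, say agent `j`'s, contains none of the `n - 1` items worth `1`
to everybody; it then holds at most one item of value `1 - ε` and fewer than `2n` items of value
`ε / (2n)`, so `v_j(Y_j) < 1`. An agent `i` holding one of the unit items `g` together with some
other item `g'` would make `j` envy `Y_i \ {g'} ∋ g`, so such an agent holds `{g}` only. Hence
every value is at most `1`, and so is the Nash welfare.
-/

open Finset Function

theorem exists_disjoint_of_card_lt {ι α : Type*} [Fintype ι] (Y : ι → Finset α)
    (hY : Pairwise (Disjoint on Y)) (B : Finset α) (hB : #B < Fintype.card ι) :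
    ∃ i, Disjoint (Y i) B := by
  by_contra! hmeet
  choose f hfY hfB using fun i => not_disjoint_iff.mp (hmeet i)
  obtain ⟨a, -, b, -, hab, hfab⟩ :=
    exists_ne_map_eq_of_card_lt_of_maps_to (s := univ) (by simpa using hB)
      fun i _ => hfB i
  exact disjoint_left.mp (hY hab) (hfY a) (hfab ▸ hfY b)

theorem pairwise_disjoint_of_existsUnique {ι α : Type*} {S : Finset α} {Y : ι → Finset α}
    (hYS : ∀ i, Y i ⊆ S) (hpart : ∀ g ∈ S, ∃! i, g ∈ Y i) : Pairwise (Disjoint on Y) := by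
  intro a b hab
  refine disjoint_left.mpr fun g hga hgb => hab ?_
  exact (hpart g (hYS a hga)).unique hga hgb

theorem eq_singleton_of_forall_sum_sdiff_le {α : Type*} [DecidableEq α] {u : α → ℝ}
    {A : Finset α} {g : α} {c : ℝ} (hu : ∀ x ∈ A, 0 ≤ u x) (hg : g ∈ A) (hc : c < u g)
    (hEFX : ∀ g' ∈ A, ∑ x ∈ A \ {g'}, u x ≤ c) : A = {g} := by
  refine eq_singleton_iff_unique_mem.mpr ⟨hg, fun g' hg' => ?_⟩
  by_contra hne
  have hg_mem : g ∈ A \ {g'} := mem_sdiff.mpr ⟨hg, by simpa using Ne.symm hne⟩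
  have := single_le_sum (fun x hx => hu x (mem_sdiff.mp hx).1) hg_mem
  linarith [hEFX g' hg']

namespace LowerBoundInstance

/-- Agents and items are `0`-indexed: agent `i` and item `g` are agent `i + 1` and item `g + 1`
of the paper, so agent `i`'s item of value `1 - ε` is item `2n - 2 - i`. -/
noncomputable def val (n : ℕ) (ε : ℝ) (i : Fin n) (g : Fin (2 * n - 1)) : ℝ :=
  if (g : ℕ) < n - 1 then 1
  else if (g : ℕ) = 2 * n - 2 - (i : ℕ) then 1 - ε
  else ε / (2 * n)

def unitItems (n : ℕ) : Finset (Fin (2 * n - 1)) := {g | (g : ℕ) < n - 1}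

variable {n : ℕ} {ε : ℝ}

theorem card_unitItems : #(unitItems n) = n - 1 := by
  rw [unitItems, Fin.card_filter_val_lt]
  omega

theorem val_of_mem_unitItems (i : Fin n) {g : Fin (2 * n - 1)} (hg : g ∈ unitItems n) :
    val n ε i g = 1 := by
  simp_all [val, unitItems]

theorem val_nonneg (hε0 : 0 ≤ ε) (hε1 : ε ≤ 1) (i : Fin n) (g : Fin (2 * n - 1)) :
    0 ≤ val n ε i g := by
  unfold val
  split_ifs <;> first | linarith | positivity

theorem sum_val_lt_one_of_disjoint (hε0 : 0 < ε) (hε1 : ε ≤ 1) (i : Fin n)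
    {T : Finset (Fin (2 * n - 1))} (hT : Disjoint T (unitItems n)) :
    ∑ x ∈ T, val n ε i x < 1 := by
  have hn : (0 : ℝ) < 2 * n := by have := i.pos; positivity
  set s : Fin (2 * n - 1) := ⟨2 * n - 2 - i, by omega⟩
  have hpoint : ∀ x ∈ T, val n ε i x ≤ ε / (2 * n) + if x = s then 1 - ε else 0 := by
    intro x hx
    have hx_small : ¬ (x : ℕ) < n - 1 := by
      simpa [unitItems] using disjoint_left.mp hT hx
    by_cases hxs : x = s
    · subst hxs
      rw [val, if_neg hx_small, if_pos rfl, if_pos rfl]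
      linarith [div_pos hε0 hn]
    · have : (x : ℕ) ≠ 2 * n - 2 - i := fun h => hxs (Fin.ext h)
      simp [val, hx_small, this, hxs]
  have hcard : (#T : ℝ) < 2 * n := by
    have := (card_le_univ T).trans_eq (Fintype.card_fin _)
    have := i.pos
    exact_mod_cast (by omega : #T < 2 * n)
  have hsmall : #T * (ε / (2 * n)) < ε := by
    calc #T * (ε / (2 * n)) < 2 * n * (ε / (2 * n)) := by gcongr
      _ = ε := mul_div_cancel₀ ε hn.ne'
  have hspecial : (if s ∈ T then 1 - ε else 0) ≤ 1 - ε := by split_ifs <;> linarith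
  calc ∑ x ∈ T, val n ε i x ≤ ∑ x ∈ T, (ε / (2 * n) + if x = s then 1 - ε else 0) :=
        sum_le_sum hpoint
    _ = #T * (ε / (2 * n)) + if s ∈ T then 1 - ε else 0 := by
        rw [sum_add_distrib, sum_const, sum_ite_eq', nsmul_eq_mul]
    _ < 1 := by linarith

theorem sum_val_le_one_of_efx (hε0 : 0 < ε) (hε1 : ε ≤ 1) {Y : Fin n → Finset (Fin (2 * n - 1))}
    (hY : Pairwise (Disjoint on Y))
    (hEFX : ∀ i j : Fin n, ∀ g ∈ Y j, ∑ x ∈ Y j \ {g}, val n ε i x ≤ ∑ x ∈ Y i, val n ε i x)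
    (i : Fin n) : ∑ x ∈ Y i, val n ε i x ≤ 1 := by
  obtain ⟨j, hj⟩ := exists_disjoint_of_card_lt Y hY (unitItems n) (by
    simp only [card_unitItems, Fintype.card_fin]
    exact Nat.sub_lt i.pos one_pos)
  have hj_lt := sum_val_lt_one_of_disjoint hε0 hε1 j hj
  by_cases hunit : ∃ g ∈ Y i, g ∈ unitItems n
  · obtain ⟨g, hgY, hg⟩ := hunit
    have hYi : Y i = {g} :=
      eq_singleton_of_forall_sum_sdiff_le (fun x _ => val_nonneg hε0.le hε1 j x) hgY
        (by rwa [val_of_mem_unitItems j hg]) (hEFX j i)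
    rw [hYi, sum_singleton, val_of_mem_unitItems i hg]
  · push Not at hunit
    exact (sum_val_lt_one_of_disjoint hε0 hε1 i (disjoint_left.mpr hunit)).le

end LowerBoundInstance

open LowerBoundInstance in
theorem lower_bound_instance_efx_value_le_one_general (n : ℕ)
    (ε : ℝ) (hε0 : 0 < ε) (hε1 : ε < 1)
    (v : Fin n → Fin (2 * n - 1) → ℝ)
    (hv : ∀ i g, v i g =
      if (g : ℕ) < n - 1 then 1
      else if (g : ℕ) = 2 * n - 2 - (i : ℕ) then 1 - ε
      else ε / (2 * n))
    (S : Finset (Fin (2 * n - 1))) (Y : Fin n → Finset (Fin (2 * n - 1)))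
    (hYS : ∀ i, Y i ⊆ S)
    (hpart : ∀ g ∈ S, ∃! i, g ∈ Y i)
    (hEFX : ∀ i j : Fin n, ∀ g ∈ Y j,
      ∑ x ∈ Y i, v i x ≥ ∑ x ∈ Y j \ {g}, v i x) :
    (∀ i, ∑ x ∈ Y i, v i x ≤ 1) ∧
      (∏ i, ∑ x ∈ Y i, v i x) ^ (1 / (n : ℝ)) ≤ 1 := by
  obtain rfl : v = val n ε := funext₂ hv
  have hle_one :=
    sum_val_le_one_of_efx hε0 hε1.le (pairwise_disjoint_of_existsUnique hYS hpart) hEFX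
  have hnonneg i : 0 ≤ ∑ x ∈ Y i, val n ε i x :=
    sum_nonneg fun x _ => val_nonneg hε0.le hε1.le i x
  exact ⟨hle_one, Real.rpow_le_one (prod_nonneg fun i _ => hnonneg i)
    (prod_le_one (fun i _ => hnonneg i) fun i _ => hle_one i) (by positivity)⟩

/-- In the lower-bound instance with `n` agents and `2n−1` items (agent `i` values
items `1,…,n−1` at `1`, item `2n−i` at `1−ε`, all other items at `ε/(2n)`), any EFX
allocation `Y` of any subset `S` gives every agent value at most `1`, hence
`NW(Y) ≤ 1`. (Agents and items are 0-indexed here: agent `i` stands for agent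
`i+1`, item `g` for item `g+1`.) -/
theorem lower_bound_instance_efx_value_le_one (n : ℕ) (hn : 1 ≤ n)
    (ε : ℝ) (hε0 : 0 < ε) (hε1 : ε < 1)
    (v : Fin n → Fin (2 * n - 1) → ℝ)
    (hv : ∀ i g, v i g =
      if (g : ℕ) < n - 1 then 1
      else if (g : ℕ) = 2 * n - 2 - (i : ℕ) then 1 - ε
      else ε / (2 * n))
    (S : Finset (Fin (2 * n - 1))) (Y : Fin n → Finset (Fin (2 * n - 1)))
    (hYS : ∀ i, Y i ⊆ S)
    (hpart : ∀ g ∈ S, ∃! i, g ∈ Y i)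
    (hEFX : ∀ i j : Fin n, ∀ g ∈ Y j,
      ∑ x ∈ Y i, v i x ≥ ∑ x ∈ Y j \ {g}, v i x) :
    (∀ i, ∑ x ∈ Y i, v i x ≤ 1) ∧
      (∏ i, ∑ x ∈ Y i, v i x) ^ (1 / (n : ℝ)) ≤ 1 :=
  lower_bound_instance_efx_value_le_one_general n ε hε0 hε1 v hv S Y hYS hpart hEFX
end

section
/- Let G be a bipartite graph between agents [n] and bundles, and let M be a matching in G that, subject to covering a fixed set T of bundles, maximizes the number of edges of the form (i, Z_i) (agent i matched to 'its own' bundle), and subject to that maximizes |M|. Then for any agent i* that is unmatched in M, the edge (i*, Z_{i*}) is not in G. -/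
/-- Claim 4.2 (abstract matching form): if `M` is a matching in a bipartite graph
`E` between agents and bundles (both indexed by `Fin n`) that, subject to covering
a set `T` of bundles, maximizes the number of identity edges `(i, i)`, and subject
to that maximizes its size, then no unmatched agent `i*` has the identity edge
`(i*, i*)` present in `E`. -/
theorem unmatched_agent_no_own_edge (n : ℕ) (E M : Finset (Fin n × Fin n))
    (hME : M ⊆ E)
    (hM1 : ∀ p ∈ M, ∀ q ∈ M, p.1 = q.1 → p = q)
    (hM2 : ∀ p ∈ M, ∀ q ∈ M, p.2 = q.2 → p = q)
    (T : Finset (Fin n))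
    (hT : ∀ t ∈ T, ∃ i, (i, t) ∈ M)
    (hmaxId : ∀ M' : Finset (Fin n × Fin n), M' ⊆ E →
      (∀ p ∈ M', ∀ q ∈ M', p.1 = q.1 → p = q) →
      (∀ p ∈ M', ∀ q ∈ M', p.2 = q.2 → p = q) →
      (∀ t ∈ T, ∃ i, (i, t) ∈ M') →
      (M'.filter (fun p => p.1 = p.2)).card ≤ (M.filter (fun p => p.1 = p.2)).card)
    (hmaxCard : ∀ M' : Finset (Fin n × Fin n), M' ⊆ E →
      (∀ p ∈ M', ∀ q ∈ M', p.1 = q.1 → p = q) →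
      (∀ p ∈ M', ∀ q ∈ M', p.2 = q.2 → p = q) →
      (∀ t ∈ T, ∃ i, (i, t) ∈ M') →
      (M'.filter (fun p => p.1 = p.2)).card = (M.filter (fun p => p.1 = p.2)).card →
      M'.card ≤ M.card)
    (istar : Fin n) (hunmatched : ∀ jb, (istar, jb) ∉ M) :
    (istar, istar) ∉ E := by
  intro hE
  by_cases hcov : ∃ i, (i, istar) ∈ M
  · obtain ⟨i, hi⟩ := hcov
    have hne : i ≠ istar := fun h => hunmatched istar (h ▸ hi)
    set M' : Finset (Fin n × Fin n) := insert (istar, istar) (M.erase (i, istar)) with hM'def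
    have hsub : M' ⊆ E := by
      intro p hp
      rcases Finset.mem_insert.1 hp with h | h
      · exact h ▸ hE
      · exact hME (Finset.mem_of_mem_erase h)
    have hmem : ∀ p ∈ M', p = (istar, istar) ∨ (p ∈ M ∧ p ≠ (i, istar)) := by
      intro p hp
      rcases Finset.mem_insert.1 hp with h | h
      · exact Or.inl h
      · exact Or.inr ⟨Finset.mem_of_mem_erase h, (Finset.mem_erase.1 h).1⟩
    have h1 : ∀ p ∈ M', ∀ q ∈ M', p.1 = q.1 → p = q := by
      intro p hp q hq hpq
      rcases hmem p hp with hp' | ⟨hp', hpne⟩ <;> rcases hmem q hq with hq' | ⟨hq', hqne⟩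
      · rw [hp', hq']
      · exfalso
        rw [hp'] at hpq
        have := hq'; rw [← Prod.mk.eta (p := q), ← hpq] at this
        exact hunmatched q.2 this
      · exfalso
        rw [hq'] at hpq
        have := hp'; rw [← Prod.mk.eta (p := p), hpq] at this
        exact hunmatched p.2 this
      · exact hM1 p hp' q hq' hpq
    have h2 : ∀ p ∈ M', ∀ q ∈ M', p.2 = q.2 → p = q := by
      intro p hp q hq hpq
      rcases hmem p hp with hp' | ⟨hp', hpne⟩ <;> rcases hmem q hq with hq' | ⟨hq', hqne⟩
      · rw [hp', hq']
      · exfalso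
        have : q = (i, istar) := hM2 q hq' (i, istar) hi (by rw [← hpq, hp'])
        exact hqne this
      · exfalso
        have : p = (i, istar) := hM2 p hp' (i, istar) hi (by rw [hpq, hq'])
        exact hpne this
      · exact hM2 p hp' q hq' hpq
    have hcovT : ∀ t ∈ T, ∃ j, (j, t) ∈ M' := by
      intro t ht
      obtain ⟨j, hj⟩ := hT t ht
      by_cases hjt : (j, t) = (i, istar)
      · refine ⟨istar, ?_⟩
        have : t = istar := congrArg Prod.snd hjt
        rw [this]; exact Finset.mem_insert_self _ _
      · exact ⟨j, Finset.mem_insert_of_mem (Finset.mem_erase.2 ⟨hjt, hj⟩)⟩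
    have hfilter : (M'.filter (fun p => p.1 = p.2)).card
        = (M.filter (fun p => p.1 = p.2)).card + 1 := by
      have he : (M.erase (i, istar)).filter (fun p => p.1 = p.2)
          = M.filter (fun p => p.1 = p.2) := by
        rw [Finset.filter_erase, Finset.erase_eq_of_notMem]
        simp [hne]
      rw [hM'def, Finset.filter_insert, if_pos rfl, Finset.card_insert_of_notMem, he]
      rw [he]
      intro hmm
      exact hunmatched istar (Finset.mem_filter.1 hmm).1
    have := hmaxId M' hsub h1 h2 hcovT
    omega
  · push_neg at hcov
    set M' : Finset (Fin n × Fin n) := insert (istar, istar) M with hM'def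
    have hsub : M' ⊆ E := by
      intro p hp
      rcases Finset.mem_insert.1 hp with h | h
      · exact h ▸ hE
      · exact hME h
    have h1 : ∀ p ∈ M', ∀ q ∈ M', p.1 = q.1 → p = q := by
      intro p hp q hq hpq
      rcases Finset.mem_insert.1 hp with hp' | hp' <;> rcases Finset.mem_insert.1 hq with hq' | hq'
      · rw [hp', hq']
      · exfalso
        rw [hp'] at hpq
        have := hq'; rw [← Prod.mk.eta (p := q), ← hpq] at this
        exact hunmatched q.2 this
      · exfalso
        rw [hq'] at hpq
        have := hp'; rw [← Prod.mk.eta (p := p), hpq] at this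
        exact hunmatched p.2 this
      · exact hM1 p hp' q hq' hpq
    have h2 : ∀ p ∈ M', ∀ q ∈ M', p.2 = q.2 → p = q := by
      intro p hp q hq hpq
      rcases Finset.mem_insert.1 hp with hp' | hp' <;> rcases Finset.mem_insert.1 hq with hq' | hq'
      · rw [hp', hq']
      · exfalso
        rw [hp'] at hpq
        have := hq'; rw [← Prod.mk.eta (p := q), ← hpq] at this
        exact hcov q.1 this
      · exfalso
        rw [hq'] at hpq
        have := hp'; rw [← Prod.mk.eta (p := p), hpq] at this
        exact hcov p.1 this
      · exact hM2 p hp' q hq' hpq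
    have hcovT : ∀ t ∈ T, ∃ j, (j, t) ∈ M' := by
      intro t ht
      obtain ⟨j, hj⟩ := hT t ht
      exact ⟨j, Finset.mem_insert_of_mem hj⟩
    have hfilter : (M'.filter (fun p => p.1 = p.2)).card
        = (M.filter (fun p => p.1 = p.2)).card + 1 := by
      rw [hM'def, Finset.filter_insert, if_pos rfl, Finset.card_insert_of_notMem]
      intro hmm
      exact hunmatched istar (Finset.mem_filter.1 hmm).1
    have := hmaxId M' hsub h1 h2 hcovT
    omega
end

section
/- Let M and M' be matchings in a bipartite graph with vertex parts A (agents) and B (bundles), with |M'| < |M| and M perfect on A (|M| = n = |A|). If a bundle vertex b is matched in M' to an agent different from its M-partner, and the symmetric difference / union M ∪ M' contains no cycle through b, then b lies on an M'-augmenting path in M ∪ M' originating from a B-vertex unmatched in M'. -/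
/-!
Follow the bundles b = c₀, c₁, c₂, … where cᵢ₊₁ = M aᵢ and aᵢ is an `M'`-partner of cᵢ
(with a₀ = k). Since `M` is injective and `M'` is a matching, the sequence cannot revisit
some cᵢ ≠ b, and reaching b again closes a cycle b, aⱼ, cⱼ, …, a₀, b of length at least 4
(as M k ≠ b). So cⱼ, aⱼ₋₁, cⱼ₋₁, …, a₀, b stays a path in the union graph, and since paths
in a finite graph are bounded in length, the process stops at a bundle with no `M'`-partner.
-/

/-- The union graph of a perfect matching `M` (given as a bijection from agents to
bundles) and a partial matching `M'` on the bipartite vertex set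
`Fin n ⊕ Fin n` (left = agents, right = bundles). -/
def unionGraph (n : ℕ) (M : Fin n ≃ Fin n) (M' : Finset (Fin n × Fin n)) :
    SimpleGraph (Fin n ⊕ Fin n) :=
  SimpleGraph.fromRel (fun x y =>
    ∃ i j : Fin n, x = Sum.inl i ∧ y = Sum.inr j ∧ (M i = j ∨ (i, j) ∈ M'))

namespace SimpleGraph

variable {V : Type*} {G : SimpleGraph V}

theorem Walk.IsPath.cons_isCycle_of_one_lt_length {u v : V} {p : G.Walk v u} (hp : p.IsPath)
    (h : G.Adj u v) (hl : 1 < p.length) : (Walk.cons h p).IsCycle :=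
  (Walk.cons_isCycle_iff p h).2
    ⟨hp, fun he => hl.ne' (hp.length_eq_one_of_mem_edges (Sym2.eq_swap ▸ he))⟩

theorem exists_of_forall_exists_longer [Finite V] {b : V} (P : V → Prop)
    (I : ∀ u, G.Walk u b → Prop) (hpath : ∀ u w, I u w → w.IsPath)
    (hlonger : ∀ u w, I u w → ¬ P u → ∃ v w', I v w' ∧ w.length < w'.length)
    {u : V} (w : G.Walk u b) (hw : I u w) : ∃ v w', I v w' ∧ P v := by
  have := Fintype.ofFinite V
  induction h : Fintype.card V - w.length using Nat.strong_induction_on generalizing u w with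
  | _ m ih =>
    by_cases hP : P u
    · exact ⟨u, w, hw, hP⟩
    obtain ⟨v, w', hw', hlt⟩ := hlonger u w hw hP
    have := (hpath v w' hw').length_lt
    exact ih _ (by omega) w' hw' rfl

end SimpleGraph

open SimpleGraph Sum

section UnionGraph

variable {n : ℕ} {M : Fin n ≃ Fin n} {M' : Finset (Fin n × Fin n)}

@[simp]
theorem unionGraph_adj_inl_inr {i j : Fin n} :
    (unionGraph n M M').Adj (inl i) (inr j) ↔ M i = j ∨ (i, j) ∈ M' := by
  simp [unionGraph, fromRel_adj]

/-- The invariant kept by the walk `cⱼ, aⱼ₋₁, cⱼ₋₁, …, a₀, b` with `(aᵢ, cᵢ) ∈ M'` and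
`M aᵢ = cᵢ₊₁`. -/
structure IsAlternatingPathTo (b : Fin n) {u : Fin n ⊕ Fin n}
    (w : (unionGraph n M M').Walk u (inr b)) : Prop where
  isPath : w.IsPath
  isRight : u.isRight
  ne_end : u ≠ inr b
  agent_matched : ∀ a, inl a ∈ w.support → ∃ x, (a, x) ∈ M' ∧ inr x ≠ u ∧ inr x ∈ w.support
  bundle_image : ∀ x, inr x ∈ w.support → x = b ∨ ∃ a, inl a ∈ w.support ∧ M a = x

namespace IsAlternatingPathTo

variable {a b c : Fin n} {w : (unionGraph n M M').Walk (inr c) (inr b)}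

theorem inl_notMem_support (hM' : ∀ p ∈ M', ∀ q ∈ M', p.1 = q.1 → p = q)
    (hw : IsAlternatingPathTo b w) (ha : (a, c) ∈ M') : inl a ∉ w.support := by
  intro h
  obtain ⟨x, hax, hxc, -⟩ := hw.agent_matched a h
  exact hxc (congrArg (inr ∘ Prod.snd) (hM' _ hax _ ha rfl))

theorem matching_ne_end (hM' : ∀ p ∈ M', ∀ q ∈ M', p.1 = q.1 → p = q)
    (hnocycle : ∀ w : (unionGraph n M M').Walk (inr b) (inr b), ¬ w.IsCycle)
    (hw : IsAlternatingPathTo b w) (ha : (a, c) ∈ M') : M a ≠ b := by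
  rintro rfl
  have hpath := hw.isPath.cons (hw.inl_notMem_support hM' ha)
    (h := unionGraph_adj_inl_inr.2 (.inr ha))
  have hlength : 0 < w.length :=
    Walk.not_nil_iff_lt_length.1 fun hnil => hw.ne_end hnil.eq
  refine hnocycle _ (hpath.cons_isCycle_of_one_lt_length ?_ ?_)
  · exact (unionGraph_adj_inl_inr.2 (.inl rfl)).symm
  · simpa using hlength

theorem matching_notMem_support (hM' : ∀ p ∈ M', ∀ q ∈ M', p.1 = q.1 → p = q)
    (hnocycle : ∀ w : (unionGraph n M M').Walk (inr b) (inr b), ¬ w.IsCycle)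
    (hw : IsAlternatingPathTo b w) (ha : (a, c) ∈ M') : inr (M a) ∉ w.support := by
  intro h
  rcases hw.bundle_image _ h with hb | ⟨a', ha', hMa'⟩
  · exact hw.matching_ne_end hM' hnocycle ha hb
  · exact hw.inl_notMem_support hM' ha (M.injective hMa' ▸ ha')

theorem cons_cons (hM' : ∀ p ∈ M', ∀ q ∈ M', p.1 = q.1 → p = q)
    (hnocycle : ∀ w : (unionGraph n M M').Walk (inr b) (inr b), ¬ w.IsCycle)
    (hw : IsAlternatingPathTo b w) (ha : (a, c) ∈ M') :
    IsAlternatingPathTo b (.cons (unionGraph_adj_inl_inr.2 (.inl rfl)).symm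
      (.cons (unionGraph_adj_inl_inr.2 (.inr ha)) w)) := by
  have hMa := hw.matching_notMem_support hM' hnocycle ha
  have hc : inr c ≠ inr (M a) := fun h => hMa (h ▸ w.start_mem_support)
  refine ⟨?_, rfl, ?_, ?_, ?_⟩
  · exact (hw.isPath.cons (hw.inl_notMem_support hM' ha)).cons (by simpa using hMa)
  · simpa using hw.matching_ne_end hM' hnocycle ha
  · simp only [Walk.support_cons, List.mem_cons, reduceCtorEq, inl.injEq, false_or]
    rintro a' (rfl | ha')
    · exact ⟨c, ha, hc, by simp⟩
    · obtain ⟨x, hax, -, hx⟩ := hw.agent_matched a' ha'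
      exact ⟨x, hax, fun h => hMa (h ▸ hx), by simp [hx]⟩
  · simp only [Walk.support_cons, List.mem_cons, inr.injEq, reduceCtorEq, false_or]
    rintro x (rfl | hx)
    · exact .inr ⟨a, by simp, rfl⟩
    · exact (hw.bundle_image x hx).imp_right fun ⟨a', ha', hMa'⟩ => ⟨a', by simp [ha'], hMa'⟩

end IsAlternatingPathTo

theorem isAlternatingPathTo_start {b k : Fin n} (hk : (k, b) ∈ M') (hkb : M k ≠ b) :
    IsAlternatingPathTo b (.cons (unionGraph_adj_inl_inr.2 (.inl rfl)).symm
      (.cons (unionGraph_adj_inl_inr.2 (.inr hk)) (.nil : (unionGraph n M M').Walk _ _))) := by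
  refine ⟨?_, rfl, by simpa using hkb, ?_, ?_⟩
  · simp [hkb]
  · simp only [Walk.support_cons, Walk.support_nil, List.mem_cons, reduceCtorEq, inl.injEq,
      List.not_mem_nil, or_false, false_or]
    rintro a rfl
    exact ⟨b, hk, by simpa using Ne.symm hkb, by simp⟩
  · simp only [Walk.support_cons, Walk.support_nil, List.mem_cons, inr.injEq, reduceCtorEq,
      List.not_mem_nil, or_false, false_or]
    rintro x (rfl | rfl)
    · exact .inr ⟨k, by simp, rfl⟩
    · exact .inl rfl

end UnionGraph

theorem union_of_matchings_path_general (n : ℕ) (M : Fin n ≃ Fin n)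
    (M' : Finset (Fin n × Fin n))
    (hM'1 : ∀ p ∈ M', ∀ q ∈ M', p.1 = q.1 → p = q)
    (b k : Fin n) (hk : (k, b) ∈ M') (hkb : M k ≠ b)
    (hnocycle : ∀ w : (unionGraph n M M').Walk (Sum.inr b) (Sum.inr b), ¬ w.IsCycle) :
    ∃ b0 : Fin n, (∀ i, (i, b0) ∉ M') ∧
      Nonempty ((unionGraph n M M').Path (Sum.inr b0) (Sum.inr b)) := by
  have hlonger : ∀ u (w : (unionGraph n M M').Walk u (inr b)), IsAlternatingPathTo b w →
      ¬ (∃ c, u = inr c ∧ ∀ i, (i, c) ∉ M') →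
      ∃ v, ∃ w' : (unionGraph n M M').Walk v (inr b),
        IsAlternatingPathTo b w' ∧ w.length < w'.length := by
    intro u w hw hunmatched
    obtain ⟨c, rfl⟩ := isRight_iff.1 hw.isRight
    obtain ⟨a, ha⟩ : ∃ a, (a, c) ∈ M' := by simpa using hunmatched
    exact ⟨_, _, hw.cons_cons hM'1 hnocycle ha, by simp⟩
  obtain ⟨-, w, hw, c, rfl, hc⟩ := exists_of_forall_exists_longer _ _
    (fun _ _ hw => hw.isPath) hlonger _ (isAlternatingPathTo_start hk hkb)
  exact ⟨c, hc, ⟨⟨w, hw.isPath⟩⟩⟩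

/-- Structural fact about the union of two matchings: if `M` is a perfect matching
(a bijection from agents to bundles), `M'` is a matching with `|M'| < n`, the
bundle `b` is matched in `M'` to an agent different from its `M`-partner, and the
union graph contains no cycle through `b`, then `b` lies on a path in the union
graph originating from a bundle vertex unmatched in `M'`. -/
theorem union_of_matchings_path (n : ℕ) (M : Fin n ≃ Fin n)
    (M' : Finset (Fin n × Fin n))
    (hM'1 : ∀ p ∈ M', ∀ q ∈ M', p.1 = q.1 → p = q)
    (hM'2 : ∀ p ∈ M', ∀ q ∈ M', p.2 = q.2 → p = q)
    (hcard : M'.card < n)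
    (b k : Fin n) (hk : (k, b) ∈ M') (hkb : M k ≠ b)
    (hnocycle : ∀ w : (unionGraph n M M').Walk (Sum.inr b) (Sum.inr b), ¬ w.IsCycle) :
    ∃ b0 : Fin n, (∀ i, (i, b0) ∉ M') ∧
      Nonempty ((unionGraph n M M').Path (Sum.inr b0) (Sum.inr b)) :=
  union_of_matchings_path_general n M M' hM'1 b k hk hkb hnocycle
end
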